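/- Sharpness of the generalized Bohr radius: Let R > 0 and let β ∈ ℂ satisfy R/3 < |β| < R. Then there exists a bounded holomorphic function f on the open disk D_R = {z ∈ ℂ : |z| < R}, with power series expansion f(z) = ∑_{n=0}^∞ b_n z^n at the origin, such that ∑_{n=0}^∞ |b_n| |β|^n > sup_{w ∈ D_R} |f(w)|. In particular, the Bohr radius of D_R with respect to H^∞(D_R) equals R/3. -/

import Mathlib

/-!
The extremal functions are rescaled Blaschke factors `f z = (a - z/R) / (1 - a z/R)` with
`0 < a < 1`. They are bounded by `1` on `D_R`, and their coefficients are `a` and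
`-(1 - a²) aⁿ⁻¹ / Rⁿ`, so with `t = |β| / R` the majorant series sums to
`a + (1 - a²) t / (1 - a t)`. This exceeds `1` exactly when `t (1 + 2a) > 1`, and since `t > 1/3`
such an `a < 1` exists.
-/

open ComplexConjugate Metric

namespace Complex

noncomputable def blaschkeFactor (a w : ℂ) : ℂ := (a - w) / (1 - conj a * w)

-- Taylor coefficients of `blaschkeFactor a = (a - w) ∑ (ā w)ⁿ`, using `a ā = ‖a‖²`.
noncomputable def blaschkeCoeff (a : ℂ) : ℕ → ℂ
  | 0 => a
  | n + 1 => -((1 - ‖a‖ ^ 2 : ℝ) : ℂ) * conj a ^ n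

variable {a w : ℂ}

theorem norm_one_sub_conj_mul_sq_sub_norm_sub_sq (a w : ℂ) :
    ‖1 - conj a * w‖ ^ 2 - ‖a - w‖ ^ 2 = (1 - ‖a‖ ^ 2) * (1 - ‖w‖ ^ 2) := by
  simp only [Complex.sq_norm, normSq_apply, sub_re, sub_im, mul_re, mul_im, conj_re, conj_im,
    one_re, one_im]
  ring

theorem norm_conj_mul_lt_one (ha : ‖a‖ ≤ 1) (hw : ‖w‖ < 1) : ‖conj a * w‖ < 1 := by
  rw [norm_mul, RCLike.norm_conj]
  exact mul_lt_one_of_nonneg_of_lt_one_right ha (norm_nonneg w) hw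

theorem one_sub_conj_mul_ne_zero (ha : ‖a‖ ≤ 1) (hw : ‖w‖ < 1) : 1 - conj a * w ≠ 0 :=
  sub_ne_zero.mpr fun h => (norm_conj_mul_lt_one ha hw).ne (by rw [← h, norm_one])

theorem norm_blaschkeFactor_le_one (ha : ‖a‖ ≤ 1) (hw : ‖w‖ < 1) :
    ‖blaschkeFactor a w‖ ≤ 1 := by
  have hid := norm_one_sub_conj_mul_sq_sub_norm_sub_sq a w
  have hnonneg : 0 ≤ (1 - ‖a‖ ^ 2) * (1 - ‖w‖ ^ 2) :=
    mul_nonneg (sub_nonneg.mpr (pow_le_one₀ (norm_nonneg a) ha))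
      (sub_nonneg.mpr (pow_le_one₀ (norm_nonneg w) hw.le))
  rw [blaschkeFactor, norm_div]
  refine div_le_one_of_le₀ ?_ (norm_nonneg _)
  exact (pow_le_pow_iff_left₀ (norm_nonneg _) (norm_nonneg _) two_ne_zero).mp (by linarith)

theorem differentiableOn_blaschkeFactor (ha : ‖a‖ ≤ 1) :
    DifferentiableOn ℂ (blaschkeFactor a) (ball 0 1) := by
  intro w hw
  have hden := one_sub_conj_mul_ne_zero ha (mem_ball_zero_iff.mp hw)
  unfold blaschkeFactor
  exact ((differentiableAt_const a).sub differentiableAt_id |>.div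
    ((differentiableAt_const _).sub ((differentiableAt_const _).mul differentiableAt_id))
    hden).differentiableWithinAt

theorem hasSum_blaschkeCoeff_mul_pow (ha : ‖a‖ ≤ 1) (hw : ‖w‖ < 1) :
    HasSum (fun n => blaschkeCoeff a n * w ^ n) (blaschkeFactor a w) := by
  have hq := norm_conj_mul_lt_one ha hw
  have hden := one_sub_conj_mul_ne_zero ha hw
  have htail : HasSum (fun n => blaschkeCoeff a (n + 1) * w ^ (n + 1))
      (-((1 - ‖a‖ ^ 2 : ℝ) : ℂ) * w * (1 - conj a * w)⁻¹) := by
    have hterm (n : ℕ) : blaschkeCoeff a (n + 1) * w ^ (n + 1) =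
        -((1 - ‖a‖ ^ 2 : ℝ) : ℂ) * w * (conj a * w) ^ n := by
      simp only [blaschkeCoeff]
      ring
    simpa only [hterm] using (hasSum_geometric_of_norm_lt_one hq).mul_left _
  have hsum : blaschkeFactor a w = -((1 - ‖a‖ ^ 2 : ℝ) : ℂ) * w * (1 - conj a * w)⁻¹ +
      ∑ n ∈ Finset.range 1, blaschkeCoeff a n * w ^ n := by
    simp only [Finset.sum_range_one, blaschkeCoeff, pow_zero, mul_one, blaschkeFactor]
    push_cast
    rw [← mul_conj', div_eq_mul_inv, mul_inv_eq_iff_eq_mul₀ hden, add_mul, mul_assoc _ _⁻¹,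
      inv_mul_cancel₀ hden]
    ring
  exact hsum ▸ (hasSum_nat_add_iff 1).mp htail

theorem norm_blaschkeCoeff_succ (ha : ‖a‖ ≤ 1) (n : ℕ) :
    ‖blaschkeCoeff a (n + 1)‖ = (1 - ‖a‖ ^ 2) * ‖a‖ ^ n := by
  rw [blaschkeCoeff, norm_mul, norm_neg, norm_real,
    Real.norm_of_nonneg (sub_nonneg.mpr (pow_le_one₀ (norm_nonneg a) ha)), norm_pow,
    RCLike.norm_conj]

theorem hasSum_norm_blaschkeCoeff_mul_pow (ha : ‖a‖ ≤ 1) {r : ℝ} (hr : 0 ≤ r)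
    (har : ‖a‖ * r < 1) :
    HasSum (fun n => ‖blaschkeCoeff a n‖ * r ^ n)
      (‖a‖ + (1 - ‖a‖ ^ 2) * r / (1 - ‖a‖ * r)) := by
  have hq : ‖‖a‖ * r‖ < 1 := by rwa [Real.norm_of_nonneg (by positivity)]
  have htail : HasSum (fun n => ‖blaschkeCoeff a (n + 1)‖ * r ^ (n + 1))
      ((1 - ‖a‖ ^ 2) * r * (1 - ‖a‖ * r)⁻¹) := by
    have hterm (n : ℕ) : ‖blaschkeCoeff a (n + 1)‖ * r ^ (n + 1) =
        (1 - ‖a‖ ^ 2) * r * (‖a‖ * r) ^ n := by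
      rw [norm_blaschkeCoeff_succ ha]
      ring
    simpa only [hterm] using (hasSum_geometric_of_norm_lt_one hq).mul_left _
  have hsum : ‖a‖ + (1 - ‖a‖ ^ 2) * r / (1 - ‖a‖ * r) =
      (1 - ‖a‖ ^ 2) * r * (1 - ‖a‖ * r)⁻¹ +
        ∑ n ∈ Finset.range 1, ‖blaschkeCoeff a n‖ * r ^ n := by
    simp only [Finset.sum_range_one, blaschkeCoeff, pow_zero, mul_one]
    ring
  exact hsum ▸ (hasSum_nat_add_iff 1).mp htail

section Rescaled

variable {R : ℝ}

theorem norm_div_lt_one_of_mem_ball {z : ℂ} (hz : z ∈ ball (0 : ℂ) R) : ‖z / R‖ < 1 := by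
  have hzR := mem_ball_zero_iff.mp hz
  have hR : 0 < R := (norm_nonneg z).trans_lt hzR
  rwa [norm_div, norm_real, Real.norm_of_nonneg hR.le, div_lt_one hR]

theorem hasSum_blaschkeCoeff_div_pow_mul_pow (ha : ‖a‖ ≤ 1) {z : ℂ}
    (hz : z ∈ ball (0 : ℂ) R) :
    HasSum (fun n => blaschkeCoeff a n / (R : ℂ) ^ n * z ^ n) (blaschkeFactor a (z / R)) := by
  have hterm (n : ℕ) : blaschkeCoeff a n / (R : ℂ) ^ n * z ^ n =
      blaschkeCoeff a n * (z / R) ^ n := by ring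
  simpa only [hterm] using hasSum_blaschkeCoeff_mul_pow ha (norm_div_lt_one_of_mem_ball hz)

theorem hasSum_norm_blaschkeCoeff_div_pow_mul_pow (ha : ‖a‖ ≤ 1) (hR : 0 < R) {r : ℝ}
    (hr : 0 ≤ r) (har : ‖a‖ * (r / R) < 1) :
    HasSum (fun n => ‖blaschkeCoeff a n / (R : ℂ) ^ n‖ * r ^ n)
      (‖a‖ + (1 - ‖a‖ ^ 2) * (r / R) / (1 - ‖a‖ * (r / R))) := by
  have hterm (n : ℕ) : ‖blaschkeCoeff a n / (R : ℂ) ^ n‖ * r ^ n =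
      ‖blaschkeCoeff a n‖ * (r / R) ^ n := by
    rw [norm_div, norm_pow, norm_real, Real.norm_of_nonneg hR.le, div_pow]
    ring
  simpa only [hterm] using hasSum_norm_blaschkeCoeff_mul_pow ha (by positivity) har

end Rescaled

end Complex

open Complex

theorem one_lt_add_one_sub_sq_mul_div {a t : ℝ} (ha : a < 1) (hat : a * t < 1)
    (h : 1 < t * (1 + 2 * a)) : 1 < a + (1 - a ^ 2) * t / (1 - a * t) := by
  rw [← sub_lt_iff_lt_add', lt_div_iff₀ (by linarith)]
  nlinarith [mul_lt_mul_of_pos_left h (sub_pos.mpr ha)]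

theorem exists_pos_lt_one_one_lt_mul {t : ℝ} (ht : 1 / 3 < t) :
    ∃ a : ℝ, 0 < a ∧ a < 1 ∧ 1 < t * (1 + 2 * a) := by
  obtain ⟨a, ha_lo, ha1⟩ : ∃ a, max 0 ((1 - t) / (2 * t)) < a ∧ a < 1 :=
    exists_between <| max_lt one_pos <| (div_lt_one (by linarith)).mpr (by linarith)
  obtain ⟨ha0, ha_lo⟩ := max_lt_iff.mp ha_lo
  rw [div_lt_iff₀ (by linarith)] at ha_lo
  exact ⟨a, ha0, ha1, by linarith⟩

/-- **Sharpness of the generalized Bohr radius.** For `R > 0` and any `β ∈ ℂ` with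
`R / 3 < |β| < R`, there is a bounded holomorphic function `f` on the open disk
`D_R = {z : |z| < R}`, with power series expansion `f z = ∑ bₙ zⁿ`, whose majorant series at
`β` converges and strictly exceeds `sup_{w ∈ D_R} |f w|`.  In particular the Bohr radius of
`D_R` with respect to `H^∞(D_R)` equals `R / 3`. -/
theorem stmt_1 (R : ℝ) (hR : 0 < R) (β : ℂ) (hβ₁ : R / 3 < ‖β‖) (hβ₂ : ‖β‖ < R) :
    ∃ (f : ℂ → ℂ) (b : ℕ → ℂ),
      DifferentiableOn ℂ f (ball (0 : ℂ) R) ∧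
      BddAbove ((fun w => ‖f w‖) '' ball (0 : ℂ) R) ∧
      (∀ z ∈ ball (0 : ℂ) R, HasSum (fun n => b n * z ^ n) (f z)) ∧
      Summable (fun n => ‖b n‖ * ‖β‖ ^ n) ∧
      sSup ((fun w => ‖f w‖) '' ball (0 : ℂ) R) < ∑' n, ‖b n‖ * ‖β‖ ^ n := by
  set t := ‖β‖ / R
  have ht1 : t < 1 := (div_lt_one hR).mpr hβ₂
  obtain ⟨a, ha0, ha1, hta⟩ := exists_pos_lt_one_one_lt_mul (show 1 / 3 < t by
    rw [lt_div_iff₀ hR]; linarith)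
  have hna : ‖(a : ℂ)‖ = a := by rw [norm_real, Real.norm_of_nonneg ha0.le]
  have hna1 : ‖(a : ℂ)‖ ≤ 1 := hna.trans_le ha1.le
  have hat : a * t < 1 := by nlinarith
  have hmaj := hasSum_norm_blaschkeCoeff_div_pow_mul_pow hna1 hR (norm_nonneg β)
    (by rwa [hna])
  have hbound : 1 ∈ upperBounds ((fun w => ‖blaschkeFactor a (w / R)‖) '' ball 0 R) :=
    Set.forall_mem_image.mpr fun z hz =>
      norm_blaschkeFactor_le_one hna1 (norm_div_lt_one_of_mem_ball hz)
  refine ⟨fun z => blaschkeFactor a (z / R), fun n => blaschkeCoeff a n / (R : ℂ) ^ n,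
    (differentiableOn_blaschkeFactor hna1).comp (differentiableOn_id.div_const _)
      fun z hz => mem_ball_zero_iff.mpr (norm_div_lt_one_of_mem_ball hz),
    ⟨1, hbound⟩, fun z hz => hasSum_blaschkeCoeff_div_pow_mul_pow hna1 hz,
    hmaj.summable, ?_⟩
  rw [hmaj.tsum_eq, hna]
  exact (csSup_le ((nonempty_ball.mpr hR).image _) hbound).trans_lt
    (one_lt_add_one_sub_sq_mul_div ha1 hat hta)
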